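/- Theorem (sufficient condition for optimality of the SIM): Let ρ_i = φ_i φ_i^* be mixed states with prior probabilities p_i, let λ_min be the smallest eigenvalue of Δ, let β satisfy 1 − nλ_min ≤ β < 1, and let γ = √((1−β)/n). If there is a constant α such that ψ_i^* Δ^{-1} ψ_i = α I_{r_i} for every 1 ≤ i ≤ m, then the SIM {Σ_i}_{i=0}^m is a measurement with P_I({Σ_i}) = β, and it maximizes the probability of correct detection subject to this inconclusive rate: P_D({Π_i}) ≤ P_D({Σ_i}) for every measurement {Π_i}_{i=0}^m with P_I({Π_i}) = β. -/

import Mathlib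

open Matrix BigOperators ComplexOrder

/-!
Write `P_D(Π) = ∑ᵢ Tr(ψᵢ ψᵢᴴ Πᵢ)`. The hypothesis `ψᵢᴴ Δ⁻¹ ψᵢ = α I` makes `ψᵢ ψᵢᴴ ≤ α Δ`, so every
measurement with `P_I = β` has `P_D ≤ α Tr(Δ (1 - Π₀)) = α (1 - β)`. The SIM attains this bound:
its detection probability is `γ² α Tr(Δ Δ⁻¹) = γ² α n = α (1 - β)`. It is a measurement because
`∑ᵢ Σᵢ = γ² Δ⁻¹ ≤ 1` precisely when `γ² ≤ λ_min`.
-/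

namespace Matrix

section General

variable {𝕜 : Type*} [RCLike 𝕜] {n k : Type*} [Fintype k]

lemma smul_mul_conjTranspose_smul (ψ : Matrix n k 𝕜) (c : ℝ) :
    ((c : 𝕜) • ψ) * ((c : 𝕜) • ψ)ᴴ = ((c ^ 2 : ℝ) : 𝕜) • (ψ * ψᴴ) := by
  rw [conjTranspose_smul, Matrix.smul_mul, Matrix.mul_smul, smul_smul, RCLike.star_def,
    RCLike.conj_ofReal]
  push_cast
  ring_nf

lemma sqrt_smul_mul_conjTranspose_sqrt_smul (φ : Matrix n k 𝕜) {p : ℝ} (hp : 0 ≤ p) :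
    ((√p : ℝ) : 𝕜) • φ * (((√p : ℝ) : 𝕜) • φ)ᴴ = (p : 𝕜) • (φ * φᴴ) := by
  rw [smul_mul_conjTranspose_smul, Real.sq_sqrt hp]

variable [Fintype n] [DecidableEq n]

open scoped MatrixOrder

open scoped Matrix.Norms.L2Operator in
lemma PosSemidef.trace_mul_nonneg {A B : Matrix n n 𝕜} (hA : A.PosSemidef)
    (hB : B.PosSemidef) : 0 ≤ (A * B).trace := by
  obtain ⟨C, rfl⟩ := CStarAlgebra.nonneg_iff_eq_star_mul_self.mp hB.nonneg
  rw [star_eq_conjTranspose, ← Matrix.mul_assoc, trace_mul_comm, ← Matrix.mul_assoc]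
  exact (hA.mul_mul_conjTranspose_same C).trace_nonneg

lemma trace_mul_one_sub_smul_inv {A : Matrix n n 𝕜} (hdet : IsUnit A.det) (c : 𝕜) :
    (A * (1 - c • A⁻¹)).trace = A.trace - c * Fintype.card n := by
  rw [mul_sub, mul_one, Matrix.mul_smul, mul_nonsing_inv _ hdet, trace_sub, trace_smul, trace_one,
    smul_eq_mul]

lemma inv_mul_mul_conjTranspose_inv_mul {A : Matrix n n 𝕜} (hA : A.IsHermitian)
    (ψ : Matrix n k 𝕜) : (A⁻¹ * ψ) * (A⁻¹ * ψ)ᴴ = A⁻¹ * (ψ * ψᴴ) * A⁻¹ := by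
  rw [conjTranspose_mul, conjTranspose_nonsing_inv, hA.eq, Matrix.mul_assoc, Matrix.mul_assoc,
    Matrix.mul_assoc]

/-- With `B = α A - ψ ψᴴ`, the hypothesis gives `B A⁻¹ B = α B`, and the left side is
positive semidefinite because `A⁻¹` is. -/
lemma PosDef.mul_conjTranspose_le_smul [DecidableEq k] {A : Matrix n n 𝕜} (hA : A.PosDef)
    {ψ : Matrix n k 𝕜} {α : ℝ} (hα : 0 < α) (h : ψᴴ * A⁻¹ * ψ = (α : 𝕜) • 1) :
    ψ * ψᴴ ≤ (α : 𝕜) • A := by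
  have hdet : IsUnit A.det := (isUnit_iff_isUnit_det A).mp hA.isUnit
  set B := (α : 𝕜) • A - ψ * ψᴴ
  have hB : Bᴴ = B := by
    simp [B, conjTranspose_sub, conjTranspose_smul, hA.isHermitian.eq]
  have hψ : ψᴴ * (A⁻¹ * (ψ * ψᴴ)) = (α : 𝕜) • ψᴴ := by
    rw [← Matrix.mul_assoc, ← Matrix.mul_assoc, h, smul_mul, Matrix.one_mul]
  have hBB : Bᴴ * A⁻¹ * B = (α : 𝕜) • B := by
    simp only [hB, B, sub_mul, mul_sub, Matrix.smul_mul, Matrix.mul_smul, Matrix.mul_assoc,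
      nonsing_inv_mul _ hdet, mul_nonsing_inv_cancel_left _ _ hdet, hψ, Matrix.mul_one]
    module
  have hαB : ((α : 𝕜) • B).PosSemidef := hBB ▸ hA.inv.posSemidef.conjTranspose_mul_mul_same B
  have hB' := hαB.smul (RCLike.ofReal_nonneg.mpr (inv_nonneg.mpr hα.le) : (0 : 𝕜) ≤ (α⁻¹ : ℝ))
  rwa [smul_smul, ← RCLike.ofReal_mul, inv_mul_cancel₀ hα.ne', RCLike.ofReal_one, one_smul] at hB'

section Decomposition

variable {ι : Type*} [Fintype ι] {r : ι → Type*} [∀ i, Fintype (r i)]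
  {A : Matrix n n 𝕜} {ψ : (i : ι) → Matrix n (r i) 𝕜}

lemma posDef_of_eq_sum_mul_conjTranspose (hA : A = ∑ i, ψ i * (ψ i)ᴴ) (hdet : IsUnit A.det) :
    A.PosDef :=
  (hA ▸ posSemidef_sum _ fun i _ => posSemidef_self_mul_conjTranspose (ψ i)).posDef_iff_isUnit.mpr
    ((isUnit_iff_isUnit_det A).mpr hdet)

lemma sum_trace_conjTranspose_mul_inv_mul (hA : A = ∑ i, ψ i * (ψ i)ᴴ) (hdet : IsUnit A.det) :
    ∑ i, ((ψ i)ᴴ * A⁻¹ * ψ i).trace = Fintype.card n := by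
  simp_rw [Matrix.mul_assoc, trace_mul_comm (ψ _)ᴴ, Matrix.mul_assoc]
  rw [← trace_sum, ← Finset.mul_sum, ← hA, nonsing_inv_mul _ hdet, trace_one]

lemma sum_smul_inv_mul_mul_conjTranspose (hH : A.IsHermitian) (hA : A = ∑ i, ψ i * (ψ i)ᴴ)
    (hdet : IsUnit A.det) (γ : ℝ) :
    ∑ i, ((γ : 𝕜) • (A⁻¹ * ψ i)) * ((γ : 𝕜) • (A⁻¹ * ψ i))ᴴ = ((γ ^ 2 : ℝ) : 𝕜) • A⁻¹ := by
  simp only [smul_mul_conjTranspose_smul, inv_mul_mul_conjTranspose_inv_mul hH]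
  rw [← Finset.smul_sum, ← Finset.sum_mul, ← Finset.mul_sum, ← hA, nonsing_inv_mul _ hdet,
    Matrix.one_mul]

variable [∀ i, DecidableEq (r i)]

lemma pos_of_conjTranspose_mul_inv_mul_eq_smul_one [Nonempty n] (hA : A = ∑ i, ψ i * (ψ i)ᴴ)
    (hdet : IsUnit A.det) {α : ℝ} (hα : ∀ i, (ψ i)ᴴ * A⁻¹ * ψ i = (α : 𝕜) • 1) : 0 < α := by
  have h := sum_trace_conjTranspose_mul_inv_mul hA hdet
  simp only [hα, trace_smul, trace_one, smul_eq_mul, ← Finset.mul_sum] at h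
  have h' : α * ∑ i, (Fintype.card (r i) : ℝ) = Fintype.card n := by exact_mod_cast h
  exact pos_of_mul_pos_left (h' ▸ Nat.cast_pos.mpr Fintype.card_pos) (by positivity)

lemma sum_trace_mul_smul_inv_mul_mul_conjTranspose (hH : A.IsHermitian)
    (hA : A = ∑ i, ψ i * (ψ i)ᴴ) (hdet : IsUnit A.det) {α : ℝ}
    (hα : ∀ i, (ψ i)ᴴ * A⁻¹ * ψ i = (α : 𝕜) • 1) (γ : ℝ) :
    ∑ i, (ψ i * (ψ i)ᴴ * (((γ : 𝕜) • (A⁻¹ * ψ i)) * ((γ : 𝕜) • (A⁻¹ * ψ i))ᴴ)).trace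
      = (α : 𝕜) * (γ ^ 2 : ℝ) * Fintype.card n := by
  have hterm : ∀ i, ψ i * (ψ i)ᴴ * (A⁻¹ * (ψ i * (ψ i)ᴴ) * A⁻¹)
      = (α : 𝕜) • (ψ i * (ψ i)ᴴ * A⁻¹) := fun i => by
    calc _ = ψ i * ((ψ i)ᴴ * A⁻¹ * ψ i) * (ψ i)ᴴ * A⁻¹ := by simp only [Matrix.mul_assoc]
      _ = _ := by rw [hα, Matrix.mul_smul, Matrix.mul_one, Matrix.smul_mul, Matrix.smul_mul]
  simp only [smul_mul_conjTranspose_smul, inv_mul_mul_conjTranspose_inv_mul hH, Matrix.mul_smul,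
    hterm, trace_smul, smul_eq_mul, ← Finset.mul_sum]
  rw [← trace_sum, ← Finset.sum_mul, ← hA, mul_nonsing_inv _ hdet, trace_one]
  ring

lemma sum_trace_mul_conjTranspose_mul_le (hA : A.PosDef) {α : ℝ} (hα0 : 0 < α)
    (hα : ∀ i, (ψ i)ᴴ * A⁻¹ * ψ i = (α : 𝕜) • 1) {N : ι → Matrix n n 𝕜}
    (hN : ∀ i, (N i).PosSemidef) :
    ∑ i, (ψ i * (ψ i)ᴴ * N i).trace ≤ (α : 𝕜) * (A * ∑ i, N i).trace := by
  rw [Finset.mul_sum, trace_sum, Finset.mul_sum]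
  refine Finset.sum_le_sum fun i _ => ?_
  have h := (le_iff.mp (hA.mul_conjTranspose_le_smul hα0 (hα i))).trace_mul_nonneg (hN i)
  rwa [sub_mul, trace_sub, smul_mul, trace_smul, smul_eq_mul, sub_nonneg] at h

end Decomposition

end General

open scoped MatrixOrder Matrix.Norms.L2Operator in
lemma IsHermitian.smul_inv_le_one {n : Type*} [Fintype n] [DecidableEq n] {A : Matrix n n ℂ}
    (hA : A.IsHermitian) {c : ℝ} (hc : 0 < c) (hle : ∀ i, c ≤ hA.eigenvalues i) :
    (c : ℂ) • A⁻¹ ≤ 1 := by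
  have hcA : algebraMap ℝ (Matrix n n ℂ) c ≤ A := algebraMap_le_of_le_spectrum (by
    rw [hA.spectrum_real_eq_range_eigenvalues]
    rintro _ ⟨i, rfl⟩
    exact hle i)
  have hinv := CStarAlgebra.ringInverse_le_ringInverse hcA (isStrictlyPositive_algebraMap hc)
  rw [← nonsing_inv_eq_ringInverse, ← nonsing_inv_eq_ringInverse,
    inv_eq_right_inv (A := algebraMap ℝ _ c) (B := algebraMap ℝ _ c⁻¹)
      (by rw [← map_mul, mul_inv_cancel₀ hc.ne', map_one])] at hinv
  have := smul_le_smul_of_nonneg_left hinv hc.le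
  rwa [Algebra.smul_def c (algebraMap ℝ _ c⁻¹), ← map_mul, mul_inv_cancel₀ hc.ne', map_one,
    ← Complex.coe_smul] at this

lemma sum_mul_re_trace_mul_eq_re_sum {n ι : Type*} [Fintype n] [Fintype ι] {r : ι → Type*}
    [∀ i, Fintype (r i)] {ψ : (i : ι) → Matrix n (r i) ℂ} {p : ι → ℝ} {ρ : ι → Matrix n n ℂ}
    (hψ : ∀ i, ψ i * (ψ i)ᴴ = (p i : ℂ) • ρ i) (X : ι → Matrix n n ℂ) :
    ∑ i, p i * ((ρ i * X i).trace).re = (∑ i, (ψ i * (ψ i)ᴴ * X i).trace).re := by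
  simp [hψ, Complex.re_sum, trace_smul]

end Matrix

/-- Sufficient condition for optimality of the SIM (Theorem 1): if
ψ_i^* Δ⁻¹ ψ_i = α I for all i and 1 − nλ_min ≤ β < 1, then the SIM with
γ = √((1−β)/n) is a measurement with P_I = β that maximizes the probability of
correct detection among all measurements with inconclusive rate β. -/
theorem stmt_8 {n m : ℕ} {r : Fin m → ℕ}
    (φ : (i : Fin m) → Matrix (Fin n) (Fin (r i)) ℂ)
    (p : Fin m → ℝ) (hp : ∀ i, 0 < p i) (hpsum : ∑ i, p i = 1)
    (ρ : Fin m → Matrix (Fin n) (Fin n) ℂ) (hρ : ∀ i, ρ i = φ i * (φ i)ᴴ)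
    (hρtr : ∀ i, (ρ i).trace = 1)
    (Δ : Matrix (Fin n) (Fin n) ℂ) (hΔ : Δ = ∑ i, (p i : ℂ) • ρ i)
    (hΔinv : IsUnit Δ.det) (hΔH : Δ.IsHermitian)
    (lam : ℝ) (hlam : IsLeast (Set.range hΔH.eigenvalues) lam)
    (β : ℝ) (hβ1 : 1 - (n : ℝ) * lam ≤ β) (hβ2 : β < 1)
    (γ : ℝ) (hγ : γ = Real.sqrt ((1 - β) / n))
    (ψ : (i : Fin m) → Matrix (Fin n) (Fin (r i)) ℂ)
    (hψ : ∀ i, ψ i = (Real.sqrt (p i) : ℂ) • φ i)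
    (μ : (i : Fin m) → Matrix (Fin n) (Fin (r i)) ℂ)
    (hμ : ∀ i, μ i = (γ : ℂ) • (Δ⁻¹ * ψ i))
    (α : ℝ) (hα : ∀ i, (ψ i)ᴴ * Δ⁻¹ * ψ i = (α : ℂ) • 1) :
    (1 - ∑ i, μ i * (μ i)ᴴ).PosSemidef ∧
    (Δ * (1 - ∑ i, μ i * (μ i)ᴴ)).trace = (β : ℂ) ∧
    ∀ (N0 : Matrix (Fin n) (Fin n) ℂ) (N : Fin m → Matrix (Fin n) (Fin n) ℂ),
      N0.PosSemidef → (∀ i, (N i).PosSemidef) → (N0 + ∑ i, N i = 1) →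
      (Δ * N0).trace = (β : ℂ) →
      ∑ i, p i * ((ρ i * N i).trace).re
        ≤ ∑ i, p i * ((ρ i * (μ i * (μ i)ᴴ)).trace).re := by
  have hn : (0 : ℝ) < n :=
    Nat.cast_pos.mpr (Nat.pos_of_ne_zero fun h => by subst h; simp at hβ1; linarith)
  have hγsq : γ ^ 2 = (1 - β) / n := by rw [hγ, Real.sq_sqrt (div_nonneg (by linarith) hn.le)]
  have hγn : γ ^ 2 * n = 1 - β := by rw [hγsq]; field_simp
  have hγlam : γ ^ 2 ≤ lam := by rw [hγsq, div_le_iff₀ hn]; linarith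
  have hψψ : ∀ i, ψ i * (ψ i)ᴴ = (p i : ℂ) • ρ i := fun i => by
    rw [hψ, hρ]
    exact sqrt_smul_mul_conjTranspose_sqrt_smul _ (hp i).le
  have hΔψ : Δ = ∑ i, ψ i * (ψ i)ᴴ := by simp only [hΔ, hψψ]
  have hΔtr : Δ.trace = 1 := by simp [hΔ, trace_sum, trace_smul, hρtr, ← Complex.ofReal_sum, hpsum]
  have hS : ∑ i, μ i * (μ i)ᴴ = ((γ ^ 2 : ℝ) : ℂ) • Δ⁻¹ := by
    simp only [hμ]
    exact sum_smul_inv_mul_mul_conjTranspose hΔH hΔψ hΔinv γ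
  have : Nonempty (Fin n) := Fin.pos_iff_nonempty.mp (Nat.cast_pos.mp hn)
  have hα0 : 0 < α := pos_of_conjTranspose_mul_inv_mul_eq_smul_one hΔψ hΔinv hα
  refine ⟨?_, ?_, fun N0 N _ hN hsum htr => ?_⟩
  · rw [hS]
    exact hΔH.smul_inv_le_one (hγsq ▸ div_pos (by linarith) hn)
      fun j => hγlam.trans (hlam.2 ⟨j, rfl⟩)
  · rw [hS, trace_mul_one_sub_smul_inv hΔinv, hΔtr, Fintype.card_fin]
    exact_mod_cast (by linarith : 1 - γ ^ 2 * n = β)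
  · have hSIM : ∑ i, (ψ i * (ψ i)ᴴ * (μ i * (μ i)ᴴ)).trace = ((α * (1 - β) : ℝ) : ℂ) := by
      simp only [hμ]
      refine (sum_trace_mul_smul_inv_mul_mul_conjTranspose hΔH hΔψ hΔinv hα γ).trans ?_
      rw [Fintype.card_fin, ← hγn, RCLike.ofReal_eq_complex_ofReal]
      push_cast
      ring
    rw [sum_mul_re_trace_mul_eq_re_sum hψψ, sum_mul_re_trace_mul_eq_re_sum hψψ, hSIM]
    calc (∑ i, (ψ i * (ψ i)ᴴ * N i).trace).re
        ≤ ((α : ℂ) * (Δ * ∑ i, N i).trace).re :=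
          RCLike.re_le_re (sum_trace_mul_conjTranspose_mul_le
            (posDef_of_eq_sum_mul_conjTranspose hΔψ hΔinv) hα0 hα hN)
      _ = _ := by
        rw [eq_sub_of_add_eq' hsum, mul_sub, mul_one, trace_sub, hΔtr, htr]
        norm_cast
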